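/- Let Q : X → X be a linear operator such that Q − I is invertible and ‖Q − I‖ < 1/2 (operator norm), let q ∈ X, and let x̄ be the unique solution of (Q − I)P_K(x) + x = −q. Then for every x ∈ X, every V ∈ ∂_C P_K(x), the operator (Q − I)V + I is invertible, and every x⁺ ∈ X with ((Q − I)V + I)x⁺ = −q satisfies ‖x⁺ − x̄‖ ≤ (‖Q − I‖/(1 − ‖Q − I‖)) ‖x − x̄‖, where the factor ‖Q − I‖/(1 − ‖Q − I‖) is strictly less than 1; hence the semi-smooth Newton sequence defined by ((Q − I)V(x^k) + I)x^{k+1} = −q converges Q-linearly to x̄ from any starting point. -/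

import Mathlib

open RealInnerProductSpace Filter Topology

variable {X : Type*} [NormedAddCommGroup X] [InnerProductSpace ℝ X] [FiniteDimensional ℝ X]

/-- The Clarke generalized Jacobian of a map `F : X → X` at `x`: the convex hull of all
limits of Fréchet derivatives of `F` along sequences of differentiability points
converging to `x`. -/
def clarkeJacobian (F : X → X) (x : X) : Set (X →L[ℝ] X) :=
  convexHull ℝ {V : X →L[ℝ] X | ∃ u : ℕ → X,
    (∀ k, DifferentiableAt ℝ F (u k)) ∧
    Tendsto u atTop (𝓝 x) ∧
    Tendsto (fun k => fderiv ℝ F (u k)) atTop (𝓝 V)}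

/-- `P` is the metric projection onto `K`: `P z` belongs to `K` and is a nearest point
of `K` to `z`. -/
def IsMetricProjection (K : Set X) (P : X → X) : Prop :=
  ∀ z : X, P z ∈ K ∧ ∀ y ∈ K, ‖z - P z‖ ≤ ‖z - y‖

section Aux

variable {K : Set X} {P : X → X}

/-- Variational inequality for a nearest point in a convex set. -/
private lemma proj_vi (hconv : Convex ℝ K) {w p : X} (hpK : p ∈ K)
    (hmin : ∀ y ∈ K, ‖w - p‖ ≤ ‖w - y‖) {y : X} (hy : y ∈ K) :
    ⟪w - p, y - p⟫ ≤ 0 := by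
  have : Nonempty K := ⟨⟨p, hpK⟩⟩
  have heq : ‖w - p‖ = ⨅ z : K, ‖w - (z : X)‖ := by
    apply le_antisymm
    · exact le_ciInf fun z => hmin z z.2
    · have hbdd : BddBelow (Set.range fun z : K => ‖w - (z : X)‖) :=
        ⟨0, by rintro _ ⟨z, rfl⟩; exact norm_nonneg _⟩
      exact ciInf_le hbdd ⟨p, hpK⟩
  exact (norm_eq_iInf_iff_real_inner_le_zero hconv hpK).1 heq y hy

/-- Uniqueness of the nearest point. -/
private lemma proj_unique (hconv : Convex ℝ K) (hP : IsMetricProjection K P) {w p : X}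
    (hpK : p ∈ K) (hmin : ∀ y ∈ K, ‖w - p‖ ≤ ‖w - y‖) : P w = p := by
  have h1 := proj_vi hconv hpK hmin (hP w).1
  have h2 := proj_vi hconv (hP w).1 (hP w).2 hpK
  have h3 : ‖P w - p‖ ^ 2 ≤ 0 := by
    rw [← real_inner_self_eq_norm_sq]
    simp only [inner_sub_left, inner_sub_right] at h1 h2 ⊢
    linarith
  have h4 : ‖P w - p‖ = 0 := le_antisymm (by nlinarith [norm_nonneg (P w - p)]) (norm_nonneg _)
  rw [← sub_eq_zero]
  exact norm_eq_zero.1 h4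

/-- Firm nonexpansiveness of the metric projection. -/
private lemma proj_firm (hconv : Convex ℝ K) (hP : IsMetricProjection K P) (u v : X) :
    ‖P u - P v‖ ^ 2 ≤ ⟪P u - P v, u - v⟫ := by
  have h1 := proj_vi hconv (hP u).1 (hP u).2 (hP v).1
  have h2 := proj_vi hconv (hP v).1 (hP v).2 (hP u).1
  rw [← real_inner_self_eq_norm_sq]
  simp only [inner_sub_left, inner_sub_right] at h1 h2 ⊢
  linarith [real_inner_comm u (P u), real_inner_comm u (P v), real_inner_comm v (P u),
    real_inner_comm v (P v), real_inner_comm (P u) (P v)]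

/-- The projection onto a cone is positively homogeneous. -/
private lemma proj_homog (hne : K.Nonempty) (hconv : Convex ℝ K)
    (hcone : ∀ c : ℝ, 0 ≤ c → ∀ y ∈ K, c • y ∈ K)
    (hP : IsMetricProjection K P) {c : ℝ} (hc : 0 ≤ c) (z : X) :
    P (c • z) = c • P z := by
  rcases eq_or_lt_of_le hc with h0 | h0
  · have h0K : (0 : X) ∈ K := by
      obtain ⟨y, hy⟩ := hne
      simpa using hcone 0 le_rfl y hy
    have hP0 : P 0 = 0 := by
      have h := (hP 0).2 0 h0K
      simp only [sub_zero, norm_zero] at h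
      have : ‖(0 : X) - P 0‖ = 0 := le_antisymm h (norm_nonneg _)
      rw [← sub_eq_zero]
      simpa [norm_sub_rev] using this
    rw [← h0]
    simpa using hP0
  · apply proj_unique hconv hP (hcone c hc _ (hP z).1)
    intro y hy
    have hyK : c⁻¹ • y ∈ K := hcone c⁻¹ (by positivity) y hy
    calc ‖c • z - c • P z‖ = c * ‖z - P z‖ := by
          rw [← smul_sub, norm_smul, Real.norm_of_nonneg hc]
      _ ≤ c * ‖z - c⁻¹ • y‖ := mul_le_mul_of_nonneg_left ((hP z).2 _ hyK) hc
      _ = ‖c • z - y‖ := by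
          have e : c • (z - c⁻¹ • y) = c • z - y := by
            rw [smul_sub, smul_inv_smul₀ h0.ne']
          rw [← e, norm_smul, Real.norm_of_nonneg hc]

/-- Euler identity for the derivative of a positively homogeneous map. -/
private lemma euler (homog : ∀ {c : ℝ}, 0 ≤ c → ∀ z : X, P (c • z) = c • P z)
    {w : X} (hw : DifferentiableAt ℝ P w) : fderiv ℝ P w w = P w := by
  have hL : HasDerivAt (fun t : ℝ => w + t • w) w 0 := by
    simpa using ((hasDerivAt_id (0 : ℝ)).smul_const w).const_add w
  have hfd : HasFDerivAt P (fderiv ℝ P w) (w + (0 : ℝ) • w) := by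
    simpa using hw.hasFDerivAt
  have h1 : HasDerivAt (fun t : ℝ => P (w + t • w)) (fderiv ℝ P w w) 0 :=
    hfd.comp_hasDerivAt 0 hL
  have hg : HasDerivAt (fun t : ℝ => P w + t • P w) (P w) 0 := by
    simpa using ((hasDerivAt_id (0 : ℝ)).smul_const (P w)).const_add (P w)
  have heq : (fun t : ℝ => P w + t • P w) =ᶠ[𝓝 (0 : ℝ)] fun t => P (w + t • w) := by
    filter_upwards [eventually_gt_nhds (show (-1 : ℝ) < 0 by norm_num)] with t ht
    have h1t : (0 : ℝ) ≤ 1 + t := by linarith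
    have e : w + t • w = (1 + t) • w := by rw [add_smul, one_smul]
    rw [e, homog h1t, add_smul, one_smul]
  have h2 : HasDerivAt (fun t : ℝ => P (w + t • w)) (P w) 0 :=
    hg.congr_of_eventuallyEq heq.symm
  exact h1.unique h2

/-- The derivative of a firmly nonexpansive map is firmly nonexpansive. -/
private lemma deriv_firm (hfirmP : ∀ u v : X, ‖P u - P v‖ ^ 2 ≤ ⟪P u - P v, u - v⟫)
    {w : X} (hw : DifferentiableAt ℝ P w) (d : X) :
    ‖fderiv ℝ P w d‖ ^ 2 ≤ ⟪fderiv ℝ P w d, d⟫ := by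
  have hL : HasDerivAt (fun t : ℝ => w + t • d) d 0 := by
    simpa using ((hasDerivAt_id (0 : ℝ)).smul_const d).const_add w
  have hfd : HasFDerivAt P (fderiv ℝ P w) (w + (0 : ℝ) • d) := by
    simpa using hw.hasFDerivAt
  have h1 : HasDerivAt (fun t : ℝ => P (w + t • d)) (fderiv ℝ P w d) 0 :=
    hfd.comp_hasDerivAt 0 hL
  have hslope : Tendsto (slope (fun t : ℝ => P (w + t • d)) 0) (𝓝[>] 0)
      (𝓝 (fderiv ℝ P w d)) :=
    (hasDerivAt_iff_tendsto_slope.1 h1).mono_left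
      (nhdsWithin_mono 0 (fun t ht => ne_of_gt ht))
  have cont : Continuous fun a : X => ‖a‖ ^ 2 - ⟪a, d⟫ := by
    exact (continuous_norm.pow 2).sub (continuous_id.inner continuous_const)
  have key : ∀ᶠ t in 𝓝[>] (0 : ℝ),
      (fun a : X => ‖a‖ ^ 2 - ⟪a, d⟫) (slope (fun t : ℝ => P (w + t • d)) 0 t) ≤ 0 := by
    filter_upwards [self_mem_nhdsWithin] with t (ht : 0 < t)
    have hA := hfirmP (w + t • d) w
    rw [add_sub_cancel_left, real_inner_smul_right] at hA
    set A := P (w + t • d) - P w with hAdef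
    have hsl : slope (fun t : ℝ => P (w + t • d)) 0 t = t⁻¹ • A := by
      simp [slope, hAdef]
    rw [hsl]
    have e1 : ‖t⁻¹ • A‖ ^ 2 = t⁻¹ * t⁻¹ * ‖A‖ ^ 2 := by
      rw [norm_smul, Real.norm_eq_abs, abs_of_pos (inv_pos.2 ht)]; ring
    have e2 : ⟪t⁻¹ • A, d⟫ = t⁻¹ * ⟪A, d⟫ := real_inner_smul_left _ _ _
    rw [e1, e2]
    have ht' : 0 < t⁻¹ := inv_pos.2 ht
    have h3 : t⁻¹ * t⁻¹ * ‖A‖ ^ 2 ≤ t⁻¹ * t⁻¹ * (t * ⟪A, d⟫) :=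
      mul_le_mul_of_nonneg_left hA (by positivity)
    have h4 : t⁻¹ * t⁻¹ * (t * ⟪A, d⟫) = t⁻¹ * ⟪A, d⟫ := by
      field_simp
    linarith [h3, h4 ▸ h3]
  have hle := le_of_tendsto ((cont.tendsto _).comp hslope) key
  linarith [hle]

/-- Ball lemma: two firmly nonexpansive images are at distance at most `‖d‖`. -/
private lemma ball_lemma {a b d : X} (ha : ‖a‖ ^ 2 ≤ ⟪a, d⟫) (hb : ‖b‖ ^ 2 ≤ ⟪b, d⟫) :
    ‖a - b‖ ≤ ‖d‖ := by
  have hsq : ‖a - b‖ ^ 2 ≤ ‖d‖ ^ 2 := by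
    have e1 : ‖a - b‖ ^ 2 = ‖a‖ ^ 2 - 2 * ⟪a, b⟫ + ‖b‖ ^ 2 := norm_sub_sq_real a b
    have e2 : ‖d - (a + b)‖ ^ 2 = ‖d‖ ^ 2 - 2 * ⟪d, a + b⟫ + ‖a + b‖ ^ 2 :=
      norm_sub_sq_real d (a + b)
    have e3 : ‖a + b‖ ^ 2 = ‖a‖ ^ 2 + 2 * ⟪a, b⟫ + ‖b‖ ^ 2 := norm_add_sq_real a b
    have e4 : ⟪d, a + b⟫ = ⟪d, a⟫ + ⟪d, b⟫ := inner_add_right _ _ _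
    have e5 : ⟪d, a⟫ = ⟪a, d⟫ := real_inner_comm _ _
    have e6 : ⟪d, b⟫ = ⟪b, d⟫ := real_inner_comm _ _
    have e7 : (0 : ℝ) ≤ ‖d - (a + b)‖ ^ 2 := sq_nonneg _
    nlinarith [e7]
  calc ‖a - b‖ = Real.sqrt (‖a - b‖ ^ 2) := (Real.sqrt_sq (norm_nonneg _)).symm
    _ ≤ Real.sqrt (‖d‖ ^ 2) := Real.sqrt_le_sqrt hsq
    _ = ‖d‖ := Real.sqrt_sq (norm_nonneg _)

end Aux

/-- Q-linear convergence for the quadratic projection equation: if `Q − I` is invertible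
with `‖Q − I‖ < 1/2` and `x̄` is the (unique) solution of `(Q − I) (P x) + x = −q`, then
for every Clarke generalized Jacobian `V` of the projection the Newton operator
`(Q − I) V + I` is invertible, each Newton step contracts distances to `x̄` by the factor
`‖Q − I‖ / (1 − ‖Q − I‖) < 1`, and every semi-smooth Newton sequence converges to `x̄`
from any starting point. -/
theorem semismoothNewton_quad_Qlinear_convergence
    (K : Set X) (hne : K.Nonempty) (hcl : IsClosed K) (hconv : Convex ℝ K)
    (hcone : ∀ c : ℝ, 0 ≤ c → ∀ y ∈ K, c • y ∈ K)
    (P : X → X) (hP : IsMetricProjection K P)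
    (Q : X →L[ℝ] X) (hinv : IsUnit (Q - 1)) (hQ : ‖Q - 1‖ < 1 / 2)
    (q xb : X) (hxb : (Q - 1) (P xb) + xb = -q) :
    ‖Q - 1‖ / (1 - ‖Q - 1‖) < 1 ∧
    (∀ (x : X) (V : X →L[ℝ] X), V ∈ clarkeJacobian P x →
      IsUnit ((Q - 1) * V + 1) ∧
      ∀ xp : X, ((Q - 1) * V + 1) xp = -q →
        ‖xp - xb‖ ≤ ‖Q - 1‖ / (1 - ‖Q - 1‖) * ‖x - xb‖) ∧
    (∀ (xs : ℕ → X) (Vs : ℕ → X →L[ℝ] X),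
      (∀ k, Vs k ∈ clarkeJacobian P (xs k)) →
      (∀ k, ((Q - 1) * Vs k + 1) (xs (k + 1)) = -q) →
      Tendsto xs atTop (𝓝 xb)) := by
  have hr0 : (0 : ℝ) ≤ ‖Q - 1‖ := norm_nonneg _
  have hden : 0 < 1 - ‖Q - 1‖ := by linarith
  have hfrac : ‖Q - 1‖ / (1 - ‖Q - 1‖) < 1 := by
    rw [div_lt_one hden]; linarith
  have hfirmP : ∀ u v : X, ‖P u - P v‖ ^ 2 ≤ ⟪P u - P v, u - v⟫ := proj_firm hconv hP
  have hlip : ∀ u v : X, ‖P u - P v‖ ≤ ‖u - v‖ := fun u v => by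
    simpa using ball_lemma (a := P u - P v) (b := 0) (d := u - v) (hfirmP u v) (by simp)
  have homog : ∀ {c : ℝ}, 0 ≤ c → ∀ z : X, P (c • z) = c • P z := fun hc z =>
    proj_homog hne hconv hcone hP hc z
  -- properties of Clarke Jacobian elements
  have hprops : ∀ (x : X) (V : X →L[ℝ] X), V ∈ clarkeJacobian P x →
      (∀ d : X, ‖V d‖ ^ 2 ≤ ⟪V d, d⟫) ∧ V x = P x := by
    intro x V hV
    have hTconv : Convex ℝ {W : X →L[ℝ] X | (∀ d : X, ‖W d‖ ^ 2 ≤ ⟪W d, d⟫) ∧ W x = P x} := by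
      intro A hA B hB a b ha hb hab
      refine ⟨fun d => ?_, ?_⟩
      · have h1 := hA.1 d
        have h2 := hB.1 d
        simp only [ContinuousLinearMap.add_apply, ContinuousLinearMap.coe_smul',
          Pi.smul_apply]
        set y := A d
        set z := B d
        have e1 : ‖a • y + b • z‖ ^ 2
            = a ^ 2 * ‖y‖ ^ 2 + 2 * (a * b) * ⟪y, z⟫ + b ^ 2 * ‖z‖ ^ 2 := by
          rw [norm_add_sq_real, norm_smul, norm_smul, real_inner_smul_left,
            real_inner_smul_right, Real.norm_eq_abs, Real.norm_eq_abs, mul_pow, mul_pow,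
            sq_abs, sq_abs]
          ring
        have e2 : ⟪a • y + b • z, d⟫ = a * ⟪y, d⟫ + b * ⟪z, d⟫ := by
          rw [inner_add_left, real_inner_smul_left, real_inner_smul_left]
        have cs : 2 * ⟪y, z⟫ ≤ ‖y‖ ^ 2 + ‖z‖ ^ 2 := by
          nlinarith [sq_nonneg ‖y - z‖, norm_sub_sq_real y z]
        rw [e1, e2]
        nlinarith [mul_nonneg ha hb, mul_le_mul_of_nonneg_left cs (mul_nonneg ha hb),
          mul_le_mul_of_nonneg_left h1 ha, mul_le_mul_of_nonneg_left h2 hb,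
          mul_le_mul_of_nonneg_left h1 (mul_nonneg ha ha),
          mul_le_mul_of_nonneg_left h2 (mul_nonneg hb hb)]
      · simp only [ContinuousLinearMap.add_apply, ContinuousLinearMap.coe_smul',
          Pi.smul_apply, hA.2, hB.2]
        rw [← add_smul, hab, one_smul]
    have hS : {W : X →L[ℝ] X | ∃ u : ℕ → X,
        (∀ k, DifferentiableAt ℝ P (u k)) ∧
        Tendsto u atTop (𝓝 x) ∧
        Tendsto (fun k => fderiv ℝ P (u k)) atTop (𝓝 W)} ⊆
        {W : X →L[ℝ] X | (∀ d : X, ‖W d‖ ^ 2 ≤ ⟪W d, d⟫) ∧ W x = P x} := by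
      rintro W ⟨u, hdiff, hux, hWlim⟩
      have happly : ∀ z : X, Tendsto (fun k => fderiv ℝ P (u k) z) atTop (𝓝 (W z)) := by
        intro z
        have hp : Tendsto (fun k => (fderiv ℝ P (u k), z)) atTop (𝓝 (W, z)) :=
          hWlim.prodMk_nhds tendsto_const_nhds
        exact (isBoundedBilinearMap_apply.continuous.tendsto (W, z)).comp hp
      constructor
      · intro d
        have cont : Continuous fun a : X => ‖a‖ ^ 2 - ⟪a, d⟫ :=
          (continuous_norm.pow 2).sub (continuous_id.inner continuous_const)
        have hle : ∀ k, (fun a : X => ‖a‖ ^ 2 - ⟪a, d⟫) (fderiv ℝ P (u k) d) ≤ 0 := by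
          intro k
          have := deriv_firm hfirmP (hdiff k) d
          simp only [sub_nonpos]
          linarith
        have hlim := le_of_tendsto ((cont.tendsto _).comp (happly d))
          (Eventually.of_forall hle)
        linarith
      · have h1 : Tendsto (fun k => fderiv ℝ P (u k) (u k)) atTop (𝓝 (W x)) := by
          have hp : Tendsto (fun k => (fderiv ℝ P (u k), u k)) atTop (𝓝 (W, x)) :=
            hWlim.prodMk_nhds hux
          exact (isBoundedBilinearMap_apply.continuous.tendsto (W, x)).comp hp
        have h2 : ∀ k, fderiv ℝ P (u k) (u k) = P (u k) := fun k =>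
          euler (fun hc z => homog hc z) (hdiff k)
        have h3 : Tendsto (fun k => P (u k)) atTop (𝓝 (P x)) := by
          rw [tendsto_iff_norm_sub_tendsto_zero]
          apply squeeze_zero (fun k => norm_nonneg _) (fun k => hlip (u k) x)
          exact tendsto_iff_norm_sub_tendsto_zero.1 hux
        have h1' : Tendsto (fun k => P (u k)) atTop (𝓝 (W x)) := by
          simpa only [h2] using h1
        exact tendsto_nhds_unique h1' h3
    exact convexHull_min hS hTconv hV
  -- main estimate
  have hmain : ∀ (x : X) (V : X →L[ℝ] X), V ∈ clarkeJacobian P x →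
      IsUnit ((Q - 1) * V + 1) ∧
      ∀ xp : X, ((Q - 1) * V + 1) xp = -q →
        ‖xp - xb‖ ≤ ‖Q - 1‖ / (1 - ‖Q - 1‖) * ‖x - xb‖ := by
    intro x V hV
    obtain ⟨hfirmV, hVx⟩ := hprops x V hV
    have hVd : ∀ d : X, ‖V d‖ ≤ ‖d‖ := fun d => by
      simpa using ball_lemma (a := V d) (b := 0) (d := d) (hfirmV d) (by simp)
    have hVnorm : ‖V‖ ≤ 1 := by
      apply ContinuousLinearMap.opNorm_le_bound _ zero_le_one
      intro d; rw [one_mul]; exact hVd d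
    have hunit : IsUnit ((Q - 1) * V + 1) := by
      have hnorm : ‖-((Q - 1) * V)‖ < 1 := by
        rw [norm_neg]
        calc ‖(Q - 1) * V‖ ≤ ‖Q - 1‖ * ‖V‖ := norm_mul_le _ _
          _ ≤ ‖Q - 1‖ * 1 := mul_le_mul_of_nonneg_left hVnorm hr0
          _ < 1 := by linarith
      have hu : IsUnit ((1 : X →L[ℝ] X) - -((Q - 1) * V)) := ⟨Units.oneSub _ hnorm, rfl⟩
      have e : (1 : X →L[ℝ] X) - -((Q - 1) * V) = (Q - 1) * V + 1 := by
        rw [sub_neg_eq_add, add_comm]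
      rwa [e] at hu
    refine ⟨hunit, fun xp heq => ?_⟩
    have heq' : (Q - 1) (V xp) + xp = (Q - 1) (P xb) + xb := by
      have h := heq
      simp only [ContinuousLinearMap.add_apply, ContinuousLinearMap.mul_apply,
        ContinuousLinearMap.one_apply] at h
      rw [h, hxb]
    have hkey : xp - xb = (Q - 1) ((P xb - P x - V (xb - x)) + V (xb - xp)) := by
      have expand : (P xb - P x - V (xb - x)) + V (xb - xp) = P xb - V xp := by
        rw [map_sub V, map_sub V, hVx]
        abel
      rw [expand, map_sub]
      calc xp - xb = ((Q - 1) (V xp) + xp) - (Q - 1) (V xp) - xb := by abel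
        _ = ((Q - 1) (P xb) + xb) - (Q - 1) (V xp) - xb := by rw [heq']
        _ = (Q - 1) (P xb) - (Q - 1) (V xp) := by abel
    have hb1 : ‖P xb - P x - V (xb - x)‖ ≤ ‖xb - x‖ :=
      ball_lemma (hfirmP xb x) (hfirmV (xb - x))
    have hb2 : ‖V (xb - xp)‖ ≤ ‖xb - xp‖ := hVd _
    have hest : ‖xp - xb‖ ≤ ‖Q - 1‖ * (‖x - xb‖ + ‖xp - xb‖) := by
      calc ‖xp - xb‖ = ‖(Q - 1) ((P xb - P x - V (xb - x)) + V (xb - xp))‖ := by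
            rw [← hkey]
        _ ≤ ‖Q - 1‖ * ‖(P xb - P x - V (xb - x)) + V (xb - xp)‖ :=
            (Q - 1).le_opNorm _
        _ ≤ ‖Q - 1‖ * (‖x - xb‖ + ‖xp - xb‖) := by
            apply mul_le_mul_of_nonneg_left _ hr0
            calc ‖(P xb - P x - V (xb - x)) + V (xb - xp)‖
                ≤ ‖P xb - P x - V (xb - x)‖ + ‖V (xb - xp)‖ := norm_add_le _ _
              _ ≤ ‖xb - x‖ + ‖xb - xp‖ := add_le_add hb1 hb2
              _ = ‖x - xb‖ + ‖xp - xb‖ := by rw [norm_sub_rev xb x, norm_sub_rev xb xp]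
    rw [div_mul_eq_mul_div, le_div_iff₀ hden]
    nlinarith [hest]
  refine ⟨hfrac, hmain, ?_⟩
  intro xs Vs hVs hNewton
  set c := ‖Q - 1‖ / (1 - ‖Q - 1‖) with hc
  have hc0 : 0 ≤ c := div_nonneg hr0 hden.le
  have hstep : ∀ k, ‖xs (k + 1) - xb‖ ≤ c * ‖xs k - xb‖ := fun k =>
    (hmain (xs k) (Vs k) (hVs k)).2 _ (hNewton k)
  have hbound : ∀ k, ‖xs k - xb‖ ≤ c ^ k * ‖xs 0 - xb‖ := by
    intro k
    induction k with
    | zero => simp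
    | succ n ih =>
      calc ‖xs (n + 1) - xb‖ ≤ c * ‖xs n - xb‖ := hstep n
        _ ≤ c * (c ^ n * ‖xs 0 - xb‖) := mul_le_mul_of_nonneg_left ih hc0
        _ = c ^ (n + 1) * ‖xs 0 - xb‖ := by ring
  have h0 : Tendsto (fun k => c ^ k * ‖xs 0 - xb‖) atTop (𝓝 0) := by
    simpa using (tendsto_pow_atTop_nhds_zero_of_lt_one hc0 hfrac).mul_const ‖xs 0 - xb‖
  have hz := squeeze_zero (fun k => norm_nonneg _) hbound h0
  exact tendsto_iff_norm_sub_tendsto_zero.2 hz
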